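/- Let W and W' be real 4×4 matrices satisfying Wᵀ·Q_D·W = Q_W and W'ᵀ·Q_D·W' = Q_W. Then there exists a unique real 4×4 matrix U such that Uᵀ·Q_D·U = Q_D and U·W = W'. (The group Aut(Q_D) acts simply transitively on the left on the space of augmented curvature-center coordinate matrices of ordered, oriented Descartes configurations.) -/

import Mathlib

/-!
If `Wᵀ A W = B` with `det B` a unit, then `W` is invertible, so `U W = W'` forces `U = W' W⁻¹`,
and this `U` preserves `A` because `(W' W⁻¹)ᵀ A (W' W⁻¹) = W⁻ᵀ B W⁻¹ = A`.
For the Descartes and Wilker forms, `det Q_W = -64`.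
-/

open Matrix

/-- The matrix of the Descartes quadratic form: diagonal entries `1/2`,
off-diagonal entries `-1/2`. -/
noncomputable def QD : Matrix (Fin 4) (Fin 4) ℝ :=
  Matrix.of fun i j => if i = j then 1/2 else -1/2

/-- The matrix of the Wilker quadratic form. -/
noncomputable def QW : Matrix (Fin 4) (Fin 4) ℝ :=
  !![0, -4, 0, 0; -4, 0, 0, 0; 0, 0, 2, 0; 0, 0, 0, 2]

namespace Matrix

variable {n R : Type*} [Fintype n] [DecidableEq n] [CommRing R]

theorem isUnit_det_of_transpose_mul_mul_eq {A B W : Matrix n n R}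
    (hW : Wᵀ * A * W = B) (hB : IsUnit B.det) : IsUnit W.det := by
  rw [← hW, det_mul, det_mul, det_transpose] at hB
  exact isUnit_of_mul_isUnit_right hB

theorem transpose_mul_mul_eq_self_of_transpose_mul_mul_eq {A W W' : Matrix n n R}
    (h : W'ᵀ * A * W' = Wᵀ * A * W) (hW : IsUnit W.det) :
    (W' * W⁻¹)ᵀ * A * (W' * W⁻¹) = A :=
  calc (W' * W⁻¹)ᵀ * A * (W' * W⁻¹) = W⁻¹ᵀ * (W'ᵀ * A * W') * W⁻¹ := by
        simp only [transpose_mul, Matrix.mul_assoc]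
    _ = (W * W⁻¹)ᵀ * A * (W * W⁻¹) := by
        simp only [h, transpose_mul, Matrix.mul_assoc]
    _ = A := by rw [mul_nonsing_inv W hW, transpose_one, Matrix.one_mul, Matrix.mul_one]

theorem existsUnique_transpose_mul_mul_eq_self_and_mul_eq {A B W W' : Matrix n n R}
    (hW : Wᵀ * A * W = B) (hW' : W'ᵀ * A * W' = B) (hB : IsUnit B.det) :
    ∃! U : Matrix n n R, Uᵀ * A * U = A ∧ U * W = W' := by
  have hWdet := isUnit_det_of_transpose_mul_mul_eq hW hB
  refine ⟨W' * W⁻¹, ⟨transpose_mul_mul_eq_self_of_transpose_mul_mul_eq (hW'.trans hW.symm) hWdet,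
    nonsing_inv_mul_cancel_right W W' hWdet⟩, ?_⟩
  rintro U ⟨-, rfl⟩
  exact (mul_nonsing_inv_cancel_right W U hWdet).symm

end Matrix

theorem det_QW : QW.det = -64 := by
  rw [QW, det_succ_row_zero]
  simp [Fin.sum_univ_succ, det_fin_three, Fin.succAbove]
  norm_num

theorem autQD_simply_transitive
    (W W' : Matrix (Fin 4) (Fin 4) ℝ)
    (hW : Wᵀ * QD * W = QW) (hW' : W'ᵀ * QD * W' = QW) :
    ∃! U : Matrix (Fin 4) (Fin 4) ℝ, Uᵀ * QD * U = QD ∧ U * W = W' :=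
  existsUnique_transpose_mul_mul_eq_self_and_mul_eq hW hW' <| by
    rw [det_QW]
    norm_num
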